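/- arXiv:1112.6127 — 4 statements merged into one kernel-verified Lean document; each statement's English description precedes it below -/
import Mathlib

section
/- Let H be a Heyting algebra and box : H → H satisfy a ≤ box a for all a. If L = (box L)ᶜ, then (box L)ᶜᶜ = ⊤, i.e. the double negation of '□L' is derivable. -/
theorem double_neg_box_liar {H : Type*} [HeytingAlgebra H]
    (box : H → H) (hbox : ∀ a : H, a ≤ box a)
    (L : H) (hL : L = (box L)ᶜ) : (box L)ᶜᶜ = ⊤ := by
  have hLbot : L = ⊥ := by
    have h1 : L ≤ box L ⊓ (box L)ᶜ := le_inf (hbox L) hL.le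
    exact le_bot_iff.mp (le_of_le_of_eq h1 (by simp))
  rw [← hL, hLbot, compl_bot]
end

section
/- Let H be a Heyting algebra and box : H → H a monotone map satisfying a ≤ box a for all a. If L' = box (L'ᶜ), then L' ≤ box ⊥, i.e. L' is 'weakly false': L' implies the provability of falsehood. -/
theorem liar'_weakly_false {H : Type*} [HeytingAlgebra H]
    (box : H → H) (hmono : ∀ a b : H, a ≤ b → box a ≤ box b)
    (hbox : ∀ a : H, a ≤ box a)
    (L' : H) (hL' : L' = box (L'ᶜ)) : L' ≤ box ⊥ := by
  have h1 : L'ᶜ ≤ L' := hL'.ge.trans' (hbox L'ᶜ)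
  have h2 : L'ᶜ ≤ ⊥ := by
    calc L'ᶜ = L'ᶜ ⊓ L'ᶜ := (inf_idem _).symm
    _ ≤ L' ⊓ L'ᶜ := inf_le_inf_right _ h1
    _ ≤ ⊥ := le_of_eq (inf_compl_self L')
  rw [hL']
  exact hmono _ _ h2
end

section
/- Let H be a Heyting algebra and box : H → H a monotone map. Suppose T : H → H and L ∈ H satisfy: for every a, box ((T a ⇨ a) ⊓ (a ⇨ T a)) = ⊤ (the Tarski biconditional for T is provable), and L = (T L)ᶜ. Then box ⊥ = ⊤; i.e. the existence of a provably global truth predicate entails the provability of falsehood. -/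
theorem provable_truth_predicate_entails_box_bot {H : Type*} [HeytingAlgebra H]
    (box : H → H) (hmono : ∀ a b : H, a ≤ b → box a ≤ box b)
    (T : H → H) (L : H)
    (hT : ∀ a : H, box ((T a ⇨ a) ⊓ (a ⇨ T a)) = ⊤)
    (hL : L = (T L)ᶜ) : box ⊥ = ⊤ := by
  have hLT : L ⊓ T L ≤ ⊥ := by
    nth_rewrite 1 [hL]
    simp
  have h1 : T L ⇨ L ≤ L := by
    nth_rewrite 3 [hL]
    rw [← himp_bot]
    exact le_himp_iff.mpr ((le_inf himp_inf_le inf_le_right).trans hLT)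
  have key : (T L ⇨ L) ⊓ (L ⇨ T L) ≤ ⊥ :=
    calc (T L ⇨ L) ⊓ (L ⇨ T L) ≤ L ⊓ (L ⇨ T L) := inf_le_inf_right _ h1
      _ ≤ L ⊓ T L := le_inf inf_le_left inf_himp_le
      _ ≤ ⊥ := hLT
  exact le_antisymm le_top ((hT L) ▸ hmono _ _ key)
end

section
/- Let H be a Heyting algebra and box : H → H monotone satisfying a ≤ box a for all a and the K law box (a ⇨ b) ⊓ box a ≤ box b. Suppose p ∈ H satisfies p = box (pᶜ). Then pᶜᶜ = ⊤ and p ≤ box ⊥. -/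
theorem proof_paradox {H : Type*} [HeytingAlgebra H]
    (box : H → H) (hmono : ∀ a b : H, a ≤ b → box a ≤ box b)
    (hbox : ∀ a : H, a ≤ box a)
    (hK : ∀ a b : H, box (a ⇨ b) ⊓ box a ≤ box b)
    (p : H) (hp : p = box (pᶜ)) :
    pᶜᶜ = ⊤ ∧ p ≤ box ⊥ := by
  have h1 : pᶜ ≤ p := (hbox pᶜ).trans hp.ge
  have h2 : pᶜ = ⊥ := le_bot_iff.mp (by
    calc pᶜ ≤ p ⊓ pᶜ := le_inf h1 le_rfl
    _ ≤ ⊥ := inf_compl_self p ▸ le_rfl)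
  constructor
  · rw [h2]; simp
  · rw [hp, h2]
end
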